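/- Let C ⊆ K² be a set with at least two points such that Γ*(Γ⁻¹(C)) = C. If C is an arc in K², then Γ⁻¹(C) is an 8-path in ℤ². -/

import Mathlib

open TopologicalSpace

/-- Basic (minimal) neighborhoods generating the Khalimsky topology on ℤ. -/
def khN (n : ℤ) : Set ℤ := if Odd n then {n} else {n - 1, n, n + 1}

/-- The Khalimsky (digital) topology on the integers. -/
def khLine : TopologicalSpace ℤ := generateFrom (Set.range khN)

/-- The Khalimsky topology on the digital plane ℤ × ℤ (product topology). -/
def khPlane : TopologicalSpace (ℤ × ℤ) :=
  @instTopologicalSpaceProd ℤ ℤ khLine khLine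

/-- A point of the digital plane is pure if both coordinates have the same parity. -/
def IsPure (p : ℤ × ℤ) : Prop := p.1 % 2 = p.2 % 2

/-- A point of the digital plane is mixed if it is not pure. -/
def IsMixed (p : ℤ × ℤ) : Prop := ¬ IsPure p

/-- A closed (pure) point: both coordinates even. -/
def IsClosedPt (p : ℤ × ℤ) : Prop := Even p.1 ∧ Even p.2

/-- An open (pure) point: both coordinates odd. -/
def IsOpenPt (p : ℤ × ℤ) : Prop := Odd p.1 ∧ Odd p.2

/-- The minimal open neighborhood N(x) of a point in the digital plane. -/
def minN (x : ℤ × ℤ) : Set (ℤ × ℤ) := ⋂₀ {U : Set (ℤ × ℤ) | khPlane.IsOpen U ∧ x ∈ U}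

/-- The closure cl(x) of a singleton in the digital plane. -/
def clPt (x : ℤ × ℤ) : Set (ℤ × ℤ) := @closure (ℤ × ℤ) khPlane {x}

/-- The adjacency set A(x) of a point of the digital plane. -/
def AdjSet (x : ℤ × ℤ) : Set (ℤ × ℤ) :=
  {y | y ≠ x ∧ @IsConnected (ℤ × ℤ) khPlane {x, y}}

/-- An arc: a subset of the digital plane homeomorphic (in the subspace topology)
to a finite interval of the Khalimsky line. -/
def IsArc (C : Set (ℤ × ℤ)) : Prop :=
  ∃ a b : ℤ,
    Nonempty (@Homeomorph (↥C) (↥(Set.Icc a b))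
      (TopologicalSpace.induced Subtype.val khPlane)
      (TopologicalSpace.induced Subtype.val khLine))

/-- z is an endpoint of the arc C: it has exactly one adjacent point within C. -/
def IsEndpointOf (z : ℤ × ℤ) (C : Set (ℤ × ℤ)) : Prop :=
  z ∈ C ∧ (AdjSet z ∩ C).encard = 1

/-- A Jordan curve in the digital plane. -/
def IsJordanCurve (J : Set (ℤ × ℤ)) : Prop :=
  @IsConnected (ℤ × ℤ) khPlane J ∧ 4 ≤ J.encard ∧ ∀ x ∈ J, IsArc (J \ {x})

/-- The slant embedding Γ(x,y) = (x+y, y−x) of the Rosenfeld plane into the digital plane. -/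
def Γmap (p : ℤ × ℤ) : ℤ × ℤ := (p.1 + p.2, p.2 - p.1)

/-- The operator Γ* turning subsets of ℤ² into subsets of the digital plane. -/
def ΓStar (A : Set (ℤ × ℤ)) : Set (ℤ × ℤ) :=
  Γmap '' A ∪
    {x | IsMixed x ∧ (minN x ⊆ Γmap '' A ∪ {x} ∨ clPt x ⊆ Γmap '' A ∪ {x})}

/-- 8-adjacency in ℤ². -/
def Adj8 (p q : ℤ × ℤ) : Prop := p ≠ q ∧ |p.1 - q.1| ≤ 1 ∧ |p.2 - q.2| ≤ 1

/-- 4-adjacency in ℤ². -/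
def Adj4 (p q : ℤ × ℤ) : Prop := p ≠ q ∧ |p.1 - q.1| + |p.2 - q.2| = 1

/-- The 8-neighbours of x within C. -/
def nbrs8 (C : Set (ℤ × ℤ)) (x : ℤ × ℤ) : Set (ℤ × ℤ) := {y ∈ C | Adj8 x y}

/-- The 4-neighbours of x within C. -/
def nbrs4 (C : Set (ℤ × ℤ)) (x : ℤ × ℤ) : Set (ℤ × ℤ) := {y ∈ C | Adj4 x y}

/-- x is an 8-endpoint of C. -/
def Is8Endpoint (C : Set (ℤ × ℤ)) (x : ℤ × ℤ) : Prop :=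
  x ∈ C ∧ (nbrs8 C x).encard = 1

/-- x is a 4-endpoint of C. -/
def Is4Endpoint (C : Set (ℤ × ℤ)) (x : ℤ × ℤ) : Prop :=
  x ∈ C ∧ (nbrs4 C x).encard = 1

/-- An 8-path: a finite set with exactly two 8-endpoints, every other point
having exactly two 8-adjacent points in the set. -/
def Is8Path (C : Set (ℤ × ℤ)) : Prop :=
  C.Finite ∧ {x | Is8Endpoint C x}.encard = 2 ∧
    ∀ x ∈ C, ¬ Is8Endpoint C x → (nbrs8 C x).encard = 2

/-- A 4-path. -/
def Is4Path (C : Set (ℤ × ℤ)) : Prop :=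
  C.Finite ∧ {x | Is4Endpoint C x}.encard = 2 ∧
    ∀ x ∈ C, ¬ Is4Endpoint C x → (nbrs4 C x).encard = 2

/-- A closed 8-curve: every point has exactly two 8-adjacent points in the set. -/
def Is8ClosedCurve (C : Set (ℤ × ℤ)) : Prop :=
  C.Finite ∧ ∀ x ∈ C, (nbrs8 C x).encard = 2

/-- A closed 4-curve. -/
def Is4ClosedCurve (C : Set (ℤ × ℤ)) : Prop :=
  C.Finite ∧ ∀ x ∈ C, (nbrs4 C x).encard = 2

/-- 8-connectedness: there is no partition into two nonempty pieces that are
not 8-adjacent to each other. -/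
def Conn8 (S : Set (ℤ × ℤ)) : Prop :=
  ¬ ∃ A B : Set (ℤ × ℤ), A.Nonempty ∧ B.Nonempty ∧ A ∪ B = S ∧ A ∩ B = ∅ ∧
      ∀ a ∈ A, ∀ b ∈ B, ¬ Adj8 a b

/-- 4-connectedness. -/
def Conn4 (S : Set (ℤ × ℤ)) : Prop :=
  ¬ ∃ A B : Set (ℤ × ℤ), A.Nonempty ∧ B.Nonempty ∧ A ∪ B = S ∧ A ∩ B = ∅ ∧
      ∀ a ∈ A, ∀ b ∈ B, ¬ Adj4 a b

/-- T is a 4-component of S: a maximal 4-connected subset of S. -/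
def Is4CompOf (T S : Set (ℤ × ℤ)) : Prop :=
  T ⊆ S ∧ Conn4 T ∧ ∀ T' : Set (ℤ × ℤ), T ⊆ T' → T' ⊆ S → Conn4 T' → T' = T

/-- U is a connected component of S in the digital plane. -/
def IsCompOf (U S : Set (ℤ × ℤ)) : Prop :=
  ∃ x ∈ S, @connectedComponentIn (ℤ × ℤ) khPlane S x = U

/-- The set S_J of mixed points of Γ*(Γ⁻¹(J)) having exactly three adjacent points in J. -/
def SJ (J : Set (ℤ × ℤ)) : Set (ℤ × ℤ) :=
  {m | m ∈ ΓStar (Γmap ⁻¹' J) ∧ IsMixed m ∧ (AdjSet m ∩ J).encard = 3}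


/-!
Label the arc by a bijection `e : C → [a, b]` onto an interval of the Khalimsky line, so that two
points of `C` are adjacent iff their labels differ by one. Since `C = Γ*(Γ⁻¹ C)`, a mixed point lies
in `C` iff it is the midpoint of a horizontal or vertical pair of pure points of `C`; these are
then its two neighbours on the arc. Under `Γ`, 4-steps of ℤ² become diagonal steps between pure
points of K² and diagonal steps become horizontal or vertical steps of length two. Hence two
points of `Γ⁻¹ C` are 8-adjacent iff their labels are consecutive among the labels of pure points,
so every point has exactly one 8-neighbour on each side except the first and the last one.
-/

open Topology

lemma encard_setOf_eq_one_of_existsUnique {α : Type*} {P : α → Prop} (h : ∃! x, P x) :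
    {x | P x}.encard = 1 := by
  obtain ⟨x, hx, huniq⟩ := h
  exact Set.encard_eq_one.2 ⟨x, Set.eq_singleton_iff_unique_mem.2 ⟨hx, huniq⟩⟩

section LinearArrangement

variable {β : Type*} [LinearOrder β] {S : Set (ℤ × ℤ)} {g : ℤ × ℤ → β} {u v : ℤ × ℤ}
  (hg : S.InjOn g) (hmem : ∀ p ∈ S, g p ∈ Set.Icc (g u) (g v))
  (hsucc : ∀ p ∈ S, g p < g v → ∃! q, q ∈ nbrs8 S p ∧ g p < g q)
  (hpred : ∀ p ∈ S, g u < g p → ∃! q, q ∈ nbrs8 S p ∧ g q < g p)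
include hg hmem hsucc hpred

lemma encard_nbrs8_eq {p : ℤ × ℤ} (hp : p ∈ S) :
    (nbrs8 S p).encard = (if g u < g p then 1 else 0) + (if g p < g v then 1 else 0) := by
  have hsplit : nbrs8 S p =
      {q | q ∈ nbrs8 S p ∧ g q < g p} ∪ {q | q ∈ nbrs8 S p ∧ g p < g q} := by
    ext q
    simp only [Set.mem_union, Set.mem_ofPred_eq, ← and_or_left, iff_self_and]
    exact fun hq => lt_or_gt_of_ne fun h => hq.2.1 (hg hp hq.1 h.symm)
  rw [hsplit, Set.encard_union_eq (Set.disjoint_left.2 fun q h1 h2 => lt_asymm h1.2 h2.2)]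
  congr 1
  · split_ifs with h
    · exact encard_setOf_eq_one_of_existsUnique (hpred p hp h)
    · exact Set.encard_eq_zero.2 (Set.eq_empty_of_forall_notMem fun q hq =>
        h ((hmem q hq.1.1).1.trans_lt hq.2))
  · split_ifs with h
    · exact encard_setOf_eq_one_of_existsUnique (hsucc p hp h)
    · exact Set.encard_eq_zero.2 (Set.eq_empty_of_forall_notMem fun q hq =>
        h (hq.2.trans_le (hmem q hq.1.1).2))

theorem is8Path_of_existsUnique_succ_pred (hS : S.Finite) (hu : u ∈ S) (hv : v ∈ S)
    (huv : g u < g v) : Is8Path S := by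
  have hne : u ≠ v := fun h => (h ▸ huv).false
  have hlt_u : ∀ p ∈ S, g u < g p ↔ p ≠ u := fun p hp =>
    ⟨fun h hpu => (hpu ▸ h).false, fun hpu => (hmem p hp).1.lt_of_ne fun h => hpu (hg hp hu h.symm)⟩
  have hlt_v : ∀ p ∈ S, g p < g v ↔ p ≠ v := fun p hp =>
    ⟨fun h hpv => (hpv ▸ h).false, fun hpv => (hmem p hp).2.lt_of_ne fun h => hpv (hg hp hv h)⟩
  have hends : ∀ p ∈ S, Is8Endpoint S p ↔ p = u ∨ p = v := by
    intro p hp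
    simp only [Is8Endpoint, encard_nbrs8_eq hg hmem hsucc hpred hp, hlt_u p hp, hlt_v p hp]
    by_cases hpu : p = u
    · subst hpu
      simp [hp, hne]
    by_cases hpv : p = v
    · subst hpv
      simp [hp, hpu]
    simp [hpu, hpv]
  refine ⟨hS, ?_, fun p hp hend => ?_⟩
  · have : {x | Is8Endpoint S x} = {u, v} := Set.ext fun p =>
      ⟨fun h => (hends p h.1).1 h, fun h => (hends p (h.elim (· ▸ hu) (· ▸ hv))).2 h⟩
    rw [this, Set.encard_pair hne]
  · rw [hends p hp, not_or] at hend
    rw [encard_nbrs8_eq hg hmem hsucc hpred hp, if_pos ((hlt_u p hp).2 hend.1),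
      if_pos ((hlt_v p hp).2 hend.2)]
    norm_num

end LinearArrangement

lemma mem_khN_iff {m n : ℤ} : m ∈ khN n ↔ m = n ∨ (n % 2 = 0 ∧ (m = n - 1 ∨ m = n + 1)) := by
  unfold khN
  split_ifs with hn
  · have := Int.odd_iff.mp hn
    simp only [Set.mem_singleton_iff]
    omega
  · have := Int.not_odd_iff.mp hn
    simp only [Set.mem_insert_iff, Set.mem_singleton_iff]
    omega

lemma khN_subset_of_isOpen {U : Set ℤ} (hU : IsOpen[khLine] U) {n : ℤ} (hn : n ∈ U) :
    khN n ⊆ U := by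
  induction hU generalizing n with
  | basic s hs =>
    obtain ⟨k, rfl⟩ := hs
    intro m hm
    rw [mem_khN_iff] at hn hm ⊢
    omega
  | univ => exact Set.subset_univ _
  | inter s t _ _ hs ht => exact Set.subset_inter (hs hn.1) (ht hn.2)
  | sUnion S _ hS =>
    obtain ⟨s, hsS, hns⟩ := hn
    exact (hS s hsS hns).trans (Set.subset_sUnion_of_mem hsS)

lemma specializes_khLine_iff {m n : ℤ} : @Specializes ℤ khLine m n ↔ m ∈ khN n := by
  rw [@specializes_iff_forall_open ℤ khLine]
  refine ⟨fun h => h _ (.basic _ ⟨n, rfl⟩) (mem_khN_iff.2 (.inl rfl)), ?_⟩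
  exact fun hm U hU hn => khN_subset_of_isOpen hU hn hm

lemma specializes_khPlane_iff {x y : ℤ × ℤ} :
    @Specializes _ khPlane x y ↔ x.1 ∈ khN y.1 ∧ x.2 ∈ khN y.2 := by
  rw [← specializes_khLine_iff, ← specializes_khLine_iff]
  exact @specializes_prod ℤ ℤ khLine khLine x.1 y.1 x.2 y.2

lemma mem_minN_iff {x y : ℤ × ℤ} : y ∈ minN x ↔ y.1 ∈ khN x.1 ∧ y.2 ∈ khN x.2 := by
  rw [← specializes_khPlane_iff, @specializes_iff_forall_open _ khPlane]
  simp only [minN, Set.mem_sInter, Set.mem_ofPred_eq, and_imp]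
  rfl

lemma mem_clPt_iff {x y : ℤ × ℤ} : y ∈ clPt x ↔ x.1 ∈ khN y.1 ∧ x.2 ∈ khN y.2 := by
  rw [← specializes_khPlane_iff]
  exact (@specializes_iff_mem_closure _ khPlane x y).symm

lemma minN_clPt_of_isMixed {m : ℤ × ℤ} (hm : IsMixed m) :
    (minN m = {(m.1, m.2 - 1), m, (m.1, m.2 + 1)} ∧
        clPt m = {(m.1 - 1, m.2), m, (m.1 + 1, m.2)}) ∨
      (minN m = {(m.1 - 1, m.2), m, (m.1 + 1, m.2)} ∧
        clPt m = {(m.1, m.2 - 1), m, (m.1, m.2 + 1)}) := by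
  unfold IsMixed IsPure at hm
  rcases (by omega : (m.1 % 2 = 1 ∧ m.2 % 2 = 0) ∨ (m.1 % 2 = 0 ∧ m.2 % 2 = 1)) with hpar | hpar
  on_goal 1 => left
  on_goal 2 => right
  all_goals
    constructor <;> ext y <;>
    simp only [mem_minN_iff, mem_clPt_iff, mem_khN_iff, Set.mem_insert_iff,
      Set.mem_singleton_iff, Prod.ext_iff] <;> omega

/-- Comparability in the specialization order of K²; for distinct points this is the adjacency
of K², since a two-point subset of an Alexandrov space is connected iff its points are
comparable. -/
def KhComparable (x y : ℤ × ℤ) : Prop :=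
  @Specializes _ khPlane x y ∨ @Specializes _ khPlane y x

lemma khComparable_iff {x y : ℤ × ℤ} :
    KhComparable x y ↔ |x.1 - y.1| ≤ 1 ∧ |x.2 - y.2| ≤ 1 ∧ (IsPure x ∨ IsPure y ∨ x = y) := by
  simp only [KhComparable, specializes_khPlane_iff, mem_khN_iff, IsPure, abs_le, Prod.ext_iff]
  omega

def l1Dist (x y : ℤ × ℤ) : ℤ := |x.1 - y.1| + |x.2 - y.2|

lemma l1Dist_comm (x y : ℤ × ℤ) : l1Dist x y = l1Dist y x := by
  simp only [l1Dist, abs_sub_comm]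

lemma ne_of_l1Dist_eq_one {x y : ℤ × ℤ} (h : l1Dist x y = 1) : x ≠ y := by
  rintro rfl
  simp [l1Dist] at h

lemma khComparable_of_l1Dist_eq_one {x y : ℤ × ℤ} (h : l1Dist x y = 1) : KhComparable x y := by
  rw [khComparable_iff]
  simp only [l1Dist, IsPure, Int.abs_eq_natAbs] at h ⊢
  omega

lemma isPure_Γmap (p : ℤ × ℤ) : IsPure (Γmap p) := by
  simp only [IsPure, Γmap]
  omega

lemma Γmap_injective : Function.Injective Γmap := by
  intro p q h
  simp only [Γmap, Prod.ext_iff] at h ⊢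
  omega

lemma exists_Γmap_eq_of_isPure {x : ℤ × ℤ} (hx : IsPure x) : ∃ p, Γmap p = x := by
  refine ⟨((x.1 - x.2) / 2, (x.1 + x.2) / 2), ?_⟩
  simp only [IsPure] at hx
  simp only [Γmap, Prod.ext_iff]
  omega

lemma mem_image_preimage_Γmap_iff {C : Set (ℤ × ℤ)} {x : ℤ × ℤ} :
    x ∈ Γmap '' (Γmap ⁻¹' C) ↔ x ∈ C ∧ IsPure x := by
  rw [Set.image_preimage_eq_inter_range]
  exact and_congr_right fun _ => ⟨fun ⟨p, hp⟩ => hp ▸ isPure_Γmap p, exists_Γmap_eq_of_isPure⟩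

lemma adj8_iff_l1Dist_Γmap {p q : ℤ × ℤ} : Adj8 p q ↔ l1Dist (Γmap p) (Γmap q) = 2 := by
  simp only [Adj8, l1Dist, Γmap, ne_eq, Prod.ext_iff, Int.abs_eq_natAbs]
  omega

lemma triple_subset_union_singleton_iff {α : Type*} {s : Set α} {x y z : α} (hx : x ≠ y)
    (hz : z ≠ y) : {x, y, z} ⊆ s ∪ {y} ↔ x ∈ s ∧ z ∈ s := by
  simp [Set.insert_subset_iff, hx, hz]

lemma exists_midpoint_iff {X : Set (ℤ × ℤ)} {m : ℤ × ℤ} :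
    (∃ P ∈ X, ∃ Q ∈ X, P + Q = m + m ∧ l1Dist P m = 1) ↔
      ((m.1, m.2 - 1) ∈ X ∧ (m.1, m.2 + 1) ∈ X) ∨ ((m.1 - 1, m.2) ∈ X ∧ (m.1 + 1, m.2) ∈ X) := by
  constructor
  · rintro ⟨P, hP, Q, hQ, hsum, hdist⟩
    simp only [Prod.ext_iff, Prod.fst_add, Prod.snd_add] at hsum
    simp only [l1Dist, Int.abs_eq_natAbs] at hdist
    have : (P = (m.1, m.2 - 1) ∧ Q = (m.1, m.2 + 1)) ∨ (P = (m.1, m.2 + 1) ∧ Q = (m.1, m.2 - 1)) ∨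
        (P = (m.1 - 1, m.2) ∧ Q = (m.1 + 1, m.2)) ∨ (P = (m.1 + 1, m.2) ∧ Q = (m.1 - 1, m.2)) := by
      simp only [Prod.ext_iff]
      omega
    rcases this with ⟨rfl, rfl⟩ | ⟨rfl, rfl⟩ | ⟨rfl, rfl⟩ | ⟨rfl, rfl⟩
    exacts [.inl ⟨hP, hQ⟩, .inl ⟨hQ, hP⟩, .inr ⟨hP, hQ⟩, .inr ⟨hQ, hP⟩]
  · rintro (⟨hP, hQ⟩ | ⟨hP, hQ⟩) <;> refine ⟨_, hP, _, hQ, ?_, by simp [l1Dist]⟩ <;>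
      ext <;> simp only [Prod.fst_add, Prod.snd_add] <;> ring

lemma mem_ΓStar_iff_of_isMixed {A : Set (ℤ × ℤ)} {m : ℤ × ℤ} (hm : IsMixed m) :
    m ∈ ΓStar A ↔ ∃ P ∈ Γmap '' A, ∃ Q ∈ Γmap '' A, P + Q = m + m ∧ l1Dist P m = 1 := by
  have hmA : m ∉ Γmap '' A := fun ⟨p, _, hp⟩ => hm (hp ▸ isPure_Γmap p)
  simp only [ΓStar, Set.mem_union, hmA, false_or, Set.mem_ofPred_eq, hm, true_and,
    exists_midpoint_iff]
  rcases minN_clPt_of_isMixed hm with ⟨h1, h2⟩ | ⟨h1, h2⟩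
  all_goals
    rw [h1, h2, triple_subset_union_singleton_iff, triple_subset_union_singleton_iff] <;>
      simp [Prod.ext_iff, or_comm]

lemma mem_iff_exists_midpoint_of_isMixed {C : Set (ℤ × ℤ)} (hfix : ΓStar (Γmap ⁻¹' C) = C)
    {m : ℤ × ℤ} (hm : IsMixed m) :
    m ∈ C ↔ ∃ P ∈ C, ∃ Q ∈ C, P + Q = m + m ∧ l1Dist P m = 1 := by
  conv_lhs => rw [← hfix]
  simp only [mem_ΓStar_iff_of_isMixed hm, mem_image_preimage_Γmap_iff]
  refine ⟨fun ⟨P, ⟨hP, _⟩, Q, ⟨hQ, _⟩, h⟩ => ⟨P, hP, Q, hQ, h⟩,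
    fun ⟨P, hP, Q, hQ, hsum, hd⟩ => ⟨P, ⟨hP, ?_⟩, Q, ⟨hQ, ?_⟩, hsum, hd⟩⟩ <;>
  · simp only [IsMixed, IsPure, l1Dist, Prod.ext_iff, Prod.fst_add, Prod.snd_add,
      Int.abs_eq_natAbs] at hm hsum hd ⊢
    omega

/-- A labelling of `C` by an interval `[a, b]` of K under which comparability in K² becomes
comparability in K, i.e. distance at most one. -/
structure IsArcIndexing (C : Set (ℤ × ℤ)) (a b : ℤ) (e : ℤ × ℤ → ℤ) : Prop where
  bijOn : Set.BijOn e C (Set.Icc a b)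
  comparable_iff : ∀ x ∈ C, ∀ y ∈ C, KhComparable x y ↔ |e x - e y| ≤ 1

lemma mem_khN_or_mem_khN_iff {m n : ℤ} : (m ∈ khN n ∨ n ∈ khN m) ↔ |m - n| ≤ 1 := by
  simp only [mem_khN_iff, Int.abs_eq_natAbs]
  omega

lemma IsArc.exists_isArcIndexing {C : Set (ℤ × ℤ)} (hC : IsArc C) :
    ∃ a b e, IsArcIndexing C a b e := by
  classical
  obtain ⟨a, b, ⟨h⟩⟩ := hC
  let tC : TopologicalSpace C := .induced Subtype.val khPlane
  let tI : TopologicalSpace (Set.Icc a b) := .induced Subtype.val khLine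
  let e : ℤ × ℤ → ℤ := fun x => if hx : x ∈ C then h ⟨x, hx⟩ else a
  have he (x : C) : e x = h x := dif_pos x.2
  have hspec (x y : C) : @Specializes _ khPlane x y ↔ e x ∈ khN (e y) := by
    have hvalI : @IsInducing _ _ tI khLine Subtype.val := @IsInducing.mk _ _ tI khLine _ rfl
    have hvalC : @IsInducing _ _ tC khPlane Subtype.val := @IsInducing.mk _ _ tC khPlane _ rfl
    rw [he, he, ← specializes_khLine_iff, @IsInducing.specializes_iff _ _ tI khLine _ _ _ hvalI,
      h.isInducing.specializes_iff, @IsInducing.specializes_iff _ _ tC khPlane _ _ _ hvalC]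
  refine ⟨a, b, e, ⟨fun x hx => ?_, fun x hx y hy hxy => ?_, fun i hi => ?_⟩, fun x hx y hy => ?_⟩
  · exact he ⟨x, hx⟩ ▸ (h ⟨x, hx⟩).2
  · rw [he ⟨x, hx⟩, he ⟨y, hy⟩] at hxy
    exact congrArg Subtype.val (h.injective (Subtype.ext hxy))
  · exact ⟨h.symm ⟨i, hi⟩, (h.symm ⟨i, hi⟩).2, by rw [he, h.apply_symm_apply]⟩
  · rw [← mem_khN_or_mem_khN_iff, KhComparable, hspec ⟨x, hx⟩ ⟨y, hy⟩, hspec ⟨y, hy⟩ ⟨x, hx⟩]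

namespace IsArcIndexing

variable {C : Set (ℤ × ℤ)} {a b : ℤ} {e : ℤ × ℤ → ℤ}

lemma neg (hC : IsArcIndexing C a b e) : IsArcIndexing C (-b) (-a) (fun x => -e x) := by
  refine ⟨⟨fun x hx => ?_, fun x hx y hy hxy => hC.bijOn.injOn hx hy (neg_inj.1 hxy),
    fun i hi => ?_⟩, fun x hx y hy => ?_⟩
  · have := hC.bijOn.mapsTo hx
    simp only [Set.mem_Icc] at this ⊢
    omega
  · obtain ⟨x, hx, hxi⟩ := hC.bijOn.surjOn (show -i ∈ Set.Icc a b by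
      simp only [Set.mem_Icc] at hi ⊢; omega)
    exact ⟨x, hx, by simp [hxi]⟩
  · rw [hC.comparable_iff x hx y hy, neg_sub_neg, abs_sub_comm]

lemma lt_of_two_le_encard (hC : IsArcIndexing C a b e) (hcard : 2 ≤ C.encard) : a < b := by
  obtain ⟨x, y, hx, hy, hxy⟩ := Set.one_lt_encard_iff.1 (lt_of_lt_of_le (by norm_num) hcard)
  have hne : e x ≠ e y := fun h => hxy (hC.bijOn.injOn hx hy h)
  have := hC.bijOn.mapsTo hx
  have := hC.bijOn.mapsTo hy
  simp only [Set.mem_Icc] at *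
  omega

lemma index_eq_of_khComparable (hC : IsArcIndexing C a b e) {x y : ℤ × ℤ} (hx : x ∈ C)
    (hy : y ∈ C) (hxy : x ≠ y) (h : KhComparable x y) : e x = e y - 1 ∨ e x = e y + 1 := by
  have h1 := (hC.comparable_iff x hx y hy).1 h
  have h2 : e x ≠ e y := fun h => hxy (hC.bijOn.injOn hx hy h)
  simp only [Int.abs_eq_natAbs] at h1
  omega

lemma index_eq_of_l1Dist_eq_one (hC : IsArcIndexing C a b e) {x y : ℤ × ℤ} (hx : x ∈ C)
    (hy : y ∈ C) (h : l1Dist x y = 1) : e x = e y - 1 ∨ e x = e y + 1 :=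
  hC.index_eq_of_khComparable hx hy (ne_of_l1Dist_eq_one h) (khComparable_of_l1Dist_eq_one h)

variable (hC : IsArcIndexing C a b e) (hfix : ΓStar (Γmap ⁻¹' C) = C)
include hC hfix

lemma exists_pure_nbrs_of_isMixed {m : ℤ × ℤ} (hm : m ∈ C) (hmix : IsMixed m) :
    ∃ P ∈ C, ∃ Q ∈ C, IsPure P ∧ IsPure Q ∧ e P = e m - 1 ∧ e Q = e m + 1 ∧ l1Dist P Q = 2 := by
  obtain ⟨P, hP, Q, hQ, hsum, hPm⟩ := (mem_iff_exists_midpoint_of_isMixed hfix hmix).1 hm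
  simp only [IsMixed, IsPure, Prod.ext_iff, Prod.fst_add, Prod.snd_add] at hmix hsum
  have hQm : l1Dist Q m = 1 := by
    simp only [l1Dist, Int.abs_eq_natAbs] at hPm ⊢
    omega
  have hPQ : e P ≠ e Q := fun h => by
    obtain rfl := hC.bijOn.injOn hP hQ h
    simp only [l1Dist, Int.abs_eq_natAbs] at hPm
    omega
  have hpure : IsPure P ∧ IsPure Q := by
    simp only [IsPure, l1Dist, Int.abs_eq_natAbs] at hPm hQm ⊢
    omega
  have hdist : l1Dist P Q = 2 := by
    simp only [l1Dist, Int.abs_eq_natAbs] at hPm hQm ⊢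
    omega
  rcases hC.index_eq_of_l1Dist_eq_one hP hm hPm with hPe | hPe <;>
  rcases hC.index_eq_of_l1Dist_eq_one hQ hm hQm with hQe | hQe
  · omega
  · exact ⟨P, hP, Q, hQ, hpure.1, hpure.2, hPe, hQe, hdist⟩
  · exact ⟨Q, hQ, P, hP, hpure.2, hpure.1, hQe, hPe, l1Dist_comm P Q ▸ hdist⟩
  · omega

lemma index_of_l1Dist_eq_two {P Q : ℤ × ℤ} (hP : P ∈ C) (hQ : Q ∈ C) (hPp : IsPure P)
    (hQp : IsPure Q) (hd : l1Dist P Q = 2) :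
    |e P - e Q| = 1 ∨ (|e P - e Q| = 2 ∧ ∃ m ∈ C, IsMixed m ∧ 2 * e m = e P + e Q) := by
  have hne : e P ≠ e Q := fun h => by
    obtain rfl := hC.bijOn.injOn hP hQ h
    simp [l1Dist] at hd
  simp only [IsPure] at hPp hQp
  simp only [l1Dist, Int.abs_eq_natAbs] at hd
  simp only [Int.abs_eq_natAbs]
  by_cases hdiag : P.1 ≠ Q.1 ∧ P.2 ≠ Q.2
  · have hcomp : KhComparable P Q := by
      rw [khComparable_iff]
      simp only [IsPure, Int.abs_eq_natAbs]
      omega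
    have := hC.index_eq_of_khComparable hP hQ (fun h => hne (congrArg e h)) hcomp
    omega
  · set m : ℤ × ℤ := ((P.1 + Q.1) / 2, (P.2 + Q.2) / 2) with hm_def
    have hmix : IsMixed m := by
      simp only [IsMixed, IsPure, hm_def]
      omega
    have hPm : l1Dist P m = 1 := by
      simp only [l1Dist, hm_def, Int.abs_eq_natAbs]
      omega
    have hQm : l1Dist Q m = 1 := by
      simp only [l1Dist, hm_def, Int.abs_eq_natAbs]
      omega
    have hm : m ∈ C := (mem_iff_exists_midpoint_of_isMixed hfix hmix).2
      ⟨P, hP, Q, hQ, by simp only [hm_def, Prod.ext_iff, Prod.fst_add, Prod.snd_add]; omega, hPm⟩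
    have hPe := hC.index_eq_of_l1Dist_eq_one hP hm hPm
    have hQe := hC.index_eq_of_l1Dist_eq_one hQ hm hQm
    exact .inr ⟨by omega, m, hm, hmix, by omega⟩

lemma l1Dist_eq_two_of_index {P Q : ℤ × ℤ} (hP : P ∈ C) (hQ : Q ∈ C) (hPp : IsPure P)
    (hQp : IsPure Q)
    (h : |e P - e Q| = 1 ∨ (|e P - e Q| = 2 ∧ ∃ m ∈ C, IsMixed m ∧ 2 * e m = e P + e Q)) :
    l1Dist P Q = 2 := by
  rcases h with h1 | ⟨h2, m, hm, hmix, hmid⟩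
  · have hPQ : P ≠ Q := by
      rintro rfl
      simp at h1
    have hcomp := (hC.comparable_iff P hP Q hQ).2 h1.le
    rw [khComparable_iff] at hcomp
    simp only [l1Dist, ne_eq, Prod.ext_iff, Int.abs_eq_natAbs, IsPure] at hPQ hcomp hPp hQp ⊢
    omega
  · obtain ⟨P', hP', Q', hQ', -, -, hP'e, hQ'e, hd⟩ := hC.exists_pure_nbrs_of_isMixed hfix hm hmix
    simp only [Int.abs_eq_natAbs] at h2
    rcases (by omega : e P = e P' ∧ e Q = e Q' ∨ e P = e Q' ∧ e Q = e P') with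
      ⟨h3, h4⟩ | ⟨h3, h4⟩
    · rwa [hC.bijOn.injOn hP hP' h3, hC.bijOn.injOn hQ hQ' h4]
    · rwa [hC.bijOn.injOn hP hQ' h3, hC.bijOn.injOn hQ hP' h4, l1Dist_comm]

lemma adj8_iff_index {p q : ℤ × ℤ} (hp : Γmap p ∈ C) (hq : Γmap q ∈ C) :
    Adj8 p q ↔ |e (Γmap p) - e (Γmap q)| = 1 ∨ (|e (Γmap p) - e (Γmap q)| = 2 ∧
      ∃ m ∈ C, IsMixed m ∧ 2 * e m = e (Γmap p) + e (Γmap q)) :=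
  adj8_iff_l1Dist_Γmap.trans
    ⟨hC.index_of_l1Dist_eq_two hfix hp hq (isPure_Γmap p) (isPure_Γmap q),
      hC.l1Dist_eq_two_of_index hfix hp hq (isPure_Γmap p) (isPure_Γmap q)⟩

lemma existsUnique_adj8_succ {p : ℤ × ℤ} (hp : Γmap p ∈ C) (hpb : e (Γmap p) < b) :
    ∃! q, q ∈ nbrs8 (Γmap ⁻¹' C) p ∧ e (Γmap p) < e (Γmap q) := by
  have hpa := (hC.bijOn.mapsTo hp).1
  obtain ⟨w, hw, hwe⟩ := hC.bijOn.surjOn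
    (show e (Γmap p) + 1 ∈ Set.Icc a b from ⟨by omega, by omega⟩)
  -- the next label belongs either to a 4-neighbour, or to a mixed point followed by a
  -- diagonal neighbour
  by_cases hwp : IsPure w
  · obtain ⟨q, rfl⟩ := exists_Γmap_eq_of_isPure hwp
    refine ⟨q, ⟨⟨hw, (hC.adj8_iff_index hfix hp hw).2 (.inl (by simp [hwe]))⟩, by omega⟩, ?_⟩
    rintro q' ⟨⟨hq', hadj⟩, hlt⟩
    rcases (hC.adj8_iff_index hfix hp hq').1 hadj with h1 | ⟨h2, m, hm, hmix, hmid⟩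
    · simp only [Int.abs_eq_natAbs] at h1
      exact Γmap_injective (hC.bijOn.injOn hq' hw (by omega))
    · simp only [Int.abs_eq_natAbs] at h2
      exact absurd (hC.bijOn.injOn hm hw (by omega) ▸ isPure_Γmap q) hmix
  · obtain ⟨-, -, Q, hQ, -, hQp, -, hQe, -⟩ := hC.exists_pure_nbrs_of_isMixed hfix hw hwp
    obtain ⟨q, rfl⟩ := exists_Γmap_eq_of_isPure hQp
    refine ⟨q, ⟨⟨hQ, (hC.adj8_iff_index hfix hp hQ).2
      (.inr ⟨by rw [hQe, hwe, abs_eq (by norm_num)]; omega, w, hw, hwp, by omega⟩)⟩, by omega⟩, ?_⟩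
    rintro q' ⟨⟨hq', hadj⟩, hlt⟩
    rcases (hC.adj8_iff_index hfix hp hq').1 hadj with h1 | ⟨h2, -⟩
    · simp only [Int.abs_eq_natAbs] at h1
      exact absurd (hC.bijOn.injOn hq' hw (by omega) ▸ isPure_Γmap q') hwp
    · simp only [Int.abs_eq_natAbs] at h2
      exact Γmap_injective (hC.bijOn.injOn hq' hQ (by omega))

lemma existsUnique_adj8_pred {p : ℤ × ℤ} (hp : Γmap p ∈ C) (hpa : a < e (Γmap p)) :
    ∃! q, q ∈ nbrs8 (Γmap ⁻¹' C) p ∧ e (Γmap q) < e (Γmap p) := by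
  simpa only [neg_lt_neg_iff] using hC.neg.existsUnique_adj8_succ hfix hp (neg_lt_neg hpa)

lemma exists_index_eq_left (hab : a ≤ b) : ∃ u, Γmap u ∈ C ∧ e (Γmap u) = a := by
  obtain ⟨w, hw, rfl⟩ := hC.bijOn.surjOn (Set.left_mem_Icc.2 hab)
  by_cases hwp : IsPure w
  · obtain ⟨u, rfl⟩ := exists_Γmap_eq_of_isPure hwp
    exact ⟨u, hw, rfl⟩
  · obtain ⟨P, hP, -, -, -, -, hPe, -⟩ := hC.exists_pure_nbrs_of_isMixed hfix hw hwp
    have := (hC.bijOn.mapsTo hP).1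
    omega

lemma exists_index_eq_right (hab : a ≤ b) : ∃ v, Γmap v ∈ C ∧ e (Γmap v) = b := by
  obtain ⟨v, hv, hve⟩ := hC.neg.exists_index_eq_left hfix (neg_le_neg hab)
  exact ⟨v, hv, neg_inj.1 hve⟩

end IsArcIndexing

/-- Let C ⊆ K² be a set with at least two points such that Γ*(Γ⁻¹(C)) = C.
If C is an arc, then Γ⁻¹(C) is an 8-path in ℤ². -/
theorem preimage_is8Path_of_arc (C : Set (ℤ × ℤ))
    (hcard : 2 ≤ C.encard) (hfix : ΓStar (Γmap ⁻¹' C) = C) (harc : IsArc C) :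
    Is8Path (Γmap ⁻¹' C) := by
  obtain ⟨a, b, e, hC⟩ := harc.exists_isArcIndexing
  have hab : a < b := hC.lt_of_two_le_encard hcard
  obtain ⟨u, hu, rfl⟩ := hC.exists_index_eq_left hfix hab.le
  obtain ⟨v, hv, rfl⟩ := hC.exists_index_eq_right hfix hab.le
  exact is8Path_of_existsUnique_succ_pred (g := fun p => e (Γmap p))
    (fun p hp q hq h => Γmap_injective (hC.bijOn.injOn hp hq h))
    (fun _ hp => hC.bijOn.mapsTo hp)
    (fun _ => hC.existsUnique_adj8_succ hfix) (fun _ => hC.existsUnique_adj8_pred hfix)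
    ((hC.bijOn.finite_iff_finite.2 (Set.finite_Icc _ _)).preimage Γmap_injective.injOn)
    hu hv hab
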